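/- The function Φ₁ tends to 0 as μ tends to +∞, i.e. lim_{μ→+∞} Φ₁(μ) = 0. -/
import Mathlib


/-- Φ₀(μ) = 2 sin(μ(l−l₀)) sin(μl₀) − sin(μl). -/
noncomputable def Phi0 (l l₀ μ : ℝ) : ℝ :=
  2 * Real.sin (μ * (l - l₀)) * Real.sin (μ * l₀) - Real.sin (μ * l)

/-- Φ₁(μ), the lower-order part of the frequency equation. -/
noncomputable def Phi1 (E I ρ m κ l l₀ μ : ℝ) : ℝ :=
  Real.exp (-(μ * l)) *
    (2 * Real.sinh (μ * l) * Real.cos (μ * (l - 2 * l₀))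
      - 2 * Real.sinh (μ * l) * Real.cos (μ * l)
      - 2 * Real.cosh (μ * l) * Real.sin (μ * l)
      + 2 * Real.sin (μ * l) * Real.cosh (μ * (l - 2 * l₀))
      + Real.exp (μ * l) *
          (Real.cos (μ * l) + Real.sin (μ * l) - Real.cos (μ * (l - 2 * l₀)))
      - 8 * ρ / (m * μ) * Real.sinh (μ * l) * Real.sin (μ * l))
  + 2 * κ * ρ * Real.exp (-(μ * l)) / (E * I * m * μ ^ 4) *
      ((Real.cosh (μ * l) - Real.cosh (μ * (l - 2 * l₀))) * Real.sin (μ * l)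
        + (Real.cos (μ * l) - Real.cos (μ * (l - 2 * l₀))) * Real.sinh (μ * l))

open Real Filter

/-- Algebraic simplification of `Phi1` for `μ ≠ 0`. -/
lemma phi1_eq (E I ρ m κ l l₀ : ℝ) (hE : E ≠ 0) (hI : I ≠ 0) (hm : m ≠ 0)
    (μ : ℝ) (hμ : μ ≠ 0) :
    Phi1 E I ρ m κ l l₀ μ =
      Real.exp (-(2 * (μ * l))) *
        (Real.cos (μ * l) - Real.cos (μ * (l - 2 * l₀)) - Real.sin (μ * l))
      + (Real.exp (-(2 * (μ * l₀))) + Real.exp (-(2 * (μ * (l - l₀))))) * Real.sin (μ * l)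
      + μ⁻¹ * (-(4 * ρ / m) * ((1 - Real.exp (-(2 * (μ * l)))) * Real.sin (μ * l)))
      + (μ ^ 4)⁻¹ * ((κ * ρ / (E * I * m)) *
          ((1 + Real.exp (-(2 * (μ * l))) - Real.exp (-(2 * (μ * l₀)))
              - Real.exp (-(2 * (μ * (l - l₀))))) * Real.sin (μ * l)
            + (Real.cos (μ * l) - Real.cos (μ * (l - 2 * l₀)))
              * (1 - Real.exp (-(2 * (μ * l)))))) := by
  have hP : Real.exp (μ * l) ≠ 0 := Real.exp_ne_zero _
  have hQ : Real.exp (μ * (l - 2 * l₀)) ≠ 0 := Real.exp_ne_zero _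
  rw [show (2 * (μ * l₀)) = μ * l - μ * (l - 2 * l₀) by ring,
      show (2 * (μ * (l - l₀))) = μ * l + μ * (l - 2 * l₀) by ring,
      show (2 * (μ * l)) = μ * l + μ * l by ring]
  simp only [Phi1, Real.sinh_eq, Real.cosh_eq, Real.exp_neg, Real.exp_add, Real.exp_sub]
  field_simp
  ring

lemma exp_neg_mul_tendsto {c : ℝ} (hc : 0 < c) :
    Tendsto (fun μ : ℝ => Real.exp (-(2 * (μ * c)))) atTop (nhds 0) := by
  apply Real.tendsto_exp_atBot.comp
  have h : Tendsto (fun μ : ℝ => μ * (2 * c)) atTop atTop :=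
    Tendsto.atTop_mul_const (by positivity) tendsto_id
  have h' : Tendsto (fun μ : ℝ => 2 * (μ * c)) atTop atTop :=
    h.congr (fun x => by ring)
  simpa using tendsto_neg_atBot_iff.mpr h'

set_option maxHeartbeats 1000000 in
/-- `Φ₁(μ) → 0` as `μ → +∞`. -/
theorem Phi1_tendsto_zero
    (E I ρ m κ l l₀ : ℝ)
    (hE : 0 < E) (hI : 0 < I) (hρ : 0 < ρ) (hm : 0 < m) (hκ : 0 < κ)
    (hl : 0 < l) (hl₀ : 0 < l₀) (hl₀l : l₀ < l) :
    Filter.Tendsto (Phi1 E I ρ m κ l l₀) Filter.atTop (nhds 0) := by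
  have hll₀ : 0 < l - l₀ := by linarith
  have key : Phi1 E I ρ m κ l l₀ =ᶠ[atTop] fun μ =>
      Real.exp (-(2 * (μ * l))) *
        (Real.cos (μ * l) - Real.cos (μ * (l - 2 * l₀)) - Real.sin (μ * l))
      + (Real.exp (-(2 * (μ * l₀))) + Real.exp (-(2 * (μ * (l - l₀))))) * Real.sin (μ * l)
      + μ⁻¹ * (-(4 * ρ / m) * ((1 - Real.exp (-(2 * (μ * l)))) * Real.sin (μ * l)))
      + (μ ^ 4)⁻¹ * ((κ * ρ / (E * I * m)) *
          ((1 + Real.exp (-(2 * (μ * l))) - Real.exp (-(2 * (μ * l₀)))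
              - Real.exp (-(2 * (μ * (l - l₀))))) * Real.sin (μ * l)
            + (Real.cos (μ * l) - Real.cos (μ * (l - 2 * l₀)))
              * (1 - Real.exp (-(2 * (μ * l)))))) := by
    filter_upwards [eventually_gt_atTop (0 : ℝ)] with μ hμ
    exact phi1_eq E I ρ m κ l l₀ hE.ne' hI.ne' hm.ne' μ hμ.ne'
  rw [Filter.tendsto_congr' key]
  have t1 : Tendsto (fun μ : ℝ => Real.exp (-(2 * (μ * l))) *
      (Real.cos (μ * l) - Real.cos (μ * (l - 2 * l₀)) - Real.sin (μ * l)))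
      atTop (nhds 0) := by
    refine (exp_neg_mul_tendsto hl).zero_mul_isBoundedUnder_le
      (isBoundedUnder_of_eventually_le (a := 3) (Eventually.of_forall fun μ => ?_))
    simp only [Function.comp_apply, Real.norm_eq_abs]
    have h1 := abs_cos_le_one (μ * l)
    have h2 := abs_cos_le_one (μ * (l - 2 * l₀))
    have h3 := abs_sin_le_one (μ * l)
    rw [abs_le] at h1 h2 h3 ⊢
    constructor <;> [linarith [h1.1, h2.1, h3.1]; linarith [h1.2, h2.2, h3.2]]
  have t2 : Tendsto (fun μ : ℝ =>
      (Real.exp (-(2 * (μ * l₀))) + Real.exp (-(2 * (μ * (l - l₀))))) * Real.sin (μ * l))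
      atTop (nhds 0) := by
    have hf : Tendsto (fun μ : ℝ =>
        Real.exp (-(2 * (μ * l₀))) + Real.exp (-(2 * (μ * (l - l₀))))) atTop (nhds 0) := by
      simpa using (exp_neg_mul_tendsto hl₀).add (exp_neg_mul_tendsto hll₀)
    refine hf.zero_mul_isBoundedUnder_le
      (isBoundedUnder_of_eventually_le (a := 1) (Eventually.of_forall fun μ => ?_))
    simpa [Real.norm_eq_abs] using abs_sin_le_one (μ * l)
  have t3 : Tendsto (fun μ : ℝ =>
      μ⁻¹ * (-(4 * ρ / m) * ((1 - Real.exp (-(2 * (μ * l)))) * Real.sin (μ * l))))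
      atTop (nhds 0) := by
    refine tendsto_inv_atTop_zero.zero_mul_isBoundedUnder_le
      (isBoundedUnder_of_eventually_le (a := 4 * ρ / m) ?_)
    filter_upwards [eventually_ge_atTop (0 : ℝ)] with μ hμ
    simp only [Function.comp_apply, Real.norm_eq_abs]
    have he0 : 0 < Real.exp (-(2 * (μ * l))) := Real.exp_pos _
    have he1 : Real.exp (-(2 * (μ * l))) ≤ 1 := by
      apply Real.exp_le_one_iff.mpr; nlinarith
    have h1 : |(1 - Real.exp (-(2 * (μ * l)))) * Real.sin (μ * l)| ≤ 1 := by
      rw [abs_mul]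
      exact mul_le_one₀ (abs_le.mpr ⟨by linarith, by linarith⟩) (abs_nonneg _)
        (abs_sin_le_one _)
    rw [abs_mul, abs_neg, abs_of_pos (show (0:ℝ) < 4 * ρ / m by positivity)]
    exact mul_le_of_le_one_right (by positivity) h1
  have t4 : Tendsto (fun μ : ℝ =>
      (μ ^ 4)⁻¹ * ((κ * ρ / (E * I * m)) *
        ((1 + Real.exp (-(2 * (μ * l))) - Real.exp (-(2 * (μ * l₀)))
            - Real.exp (-(2 * (μ * (l - l₀))))) * Real.sin (μ * l)
          + (Real.cos (μ * l) - Real.cos (μ * (l - 2 * l₀)))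
            * (1 - Real.exp (-(2 * (μ * l)))))))
      atTop (nhds 0) := by
    have hpow : Tendsto (fun μ : ℝ => (μ ^ 4)⁻¹) atTop (nhds 0) :=
      (tendsto_pow_atTop (by norm_num : (4:ℕ) ≠ 0)).inv_tendsto_atTop
    refine hpow.zero_mul_isBoundedUnder_le
      (isBoundedUnder_of_eventually_le (a := (κ * ρ / (E * I * m)) * 4) ?_)
    filter_upwards [eventually_ge_atTop (0 : ℝ)] with μ hμ
    simp only [Function.comp_apply, Real.norm_eq_abs]
    have hC : (0:ℝ) < κ * ρ / (E * I * m) := by positivity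
    have ha0 : 0 < Real.exp (-(2 * (μ * l))) := Real.exp_pos _
    have ha1 : Real.exp (-(2 * (μ * l))) ≤ 1 := by
      apply Real.exp_le_one_iff.mpr; nlinarith
    have hb0 : 0 < Real.exp (-(2 * (μ * l₀))) := Real.exp_pos _
    have hb1 : Real.exp (-(2 * (μ * l₀))) ≤ 1 := by
      apply Real.exp_le_one_iff.mpr; nlinarith
    have hc0 : 0 < Real.exp (-(2 * (μ * (l - l₀)))) := Real.exp_pos _
    have hc1 : Real.exp (-(2 * (μ * (l - l₀)))) ≤ 1 := by
      apply Real.exp_le_one_iff.mpr; nlinarith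
    have hs := abs_le.mp (abs_sin_le_one (μ * l))
    have hc := abs_le.mp (abs_cos_le_one (μ * l))
    have hd := abs_le.mp (abs_cos_le_one (μ * (l - 2 * l₀)))
    have hB : |(1 + Real.exp (-(2 * (μ * l))) - Real.exp (-(2 * (μ * l₀)))
        - Real.exp (-(2 * (μ * (l - l₀))))) * Real.sin (μ * l)
        + (Real.cos (μ * l) - Real.cos (μ * (l - 2 * l₀)))
          * (1 - Real.exp (-(2 * (μ * l))))| ≤ 4 := by
      rw [abs_le]
      constructor <;> nlinarith [hs.1, hs.2, hc.1, hc.2, hd.1, hd.2]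
    rw [abs_mul, abs_of_pos hC]
    exact mul_le_mul_of_nonneg_left hB hC.le
  simpa using ((t1.add t2).add t3).add t4
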